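/- Let γ > 0 and g > 0 satisfy 2γg > 1. Then the function h_{γ,g} : ℝ² → ℝ² defined by h_{γ,g}(z) = g z/|z| if γ|z| ≥ g + 1/(2γ); h_{γ,g}(z) = (z/|z|)(g − (γ/2)(g − γ|z| + 1/(2γ))²) if g − 1/(2γ) ≤ γ|z| ≤ g + 1/(2γ); and h_{γ,g}(z) = γ z if γ|z| ≤ g − 1/(2γ), is continuously differentiable on all of ℝ², and satisfies |h_{γ,g}(z)| ≤ g for every z ∈ ℝ². -/

import Mathlib

/-- The C¹ local regularization `h_{γ,g}` of the subdifferential of the Euclidean norm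
(equation (3.6) of the paper). -/
noncomputable def hreg (γ g : ℝ) (z : EuclideanSpace ℝ (Fin 2)) : EuclideanSpace ℝ (Fin 2) :=
  if g + 1 / (2 * γ) ≤ γ * ‖z‖ then (g / ‖z‖) • z
  else if g - 1 / (2 * γ) ≤ γ * ‖z‖ then
    ((g - γ / 2 * (g - γ * ‖z‖ + 1 / (2 * γ)) ^ 2) / ‖z‖) • z
  else γ • z

/-!
For `z ≠ 0`, `h_{γ,g}(z) = φ(|z|) z/|z|` with the radial profile
`φ(r) = g - (γ/2)·((g + 1/(2γ) - γr)⁺)² + (γ/2)·((g - 1/(2γ) - γr)⁺)²`.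
Since `t ↦ (t⁺)²` is C¹ with derivative `2t⁺`, so is `φ`, and hence `h_{γ,g}` away from the
origin; near the origin `2γg > 1` makes `h_{γ,g}` the linear map `z ↦ γz`. On the middle
region `0 ≤ g - γ|z| + 1/(2γ) ≤ 1/γ`, so `0 < g - 1/(2γ) ≤ φ(|z|) ≤ g`.
-/

open Set Filter Topology

theorem hasDerivAt_max_zero_sq (t : ℝ) :
    HasDerivAt (fun x : ℝ => max x 0 ^ 2) (2 * max t 0) t := by
  rcases lt_trichotomy t 0 with ht | rfl | ht
  · have hzero : (fun x : ℝ => max x 0 ^ 2) =ᶠ[𝓝 t] fun _ => 0 := by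
      filter_upwards [Iio_mem_nhds ht] with x hx
      simp [max_eq_right (le_of_lt (mem_Iio.1 hx))]
    simpa [max_eq_right ht.le] using (hasDerivAt_const t (0 : ℝ)).congr_of_eventuallyEq hzero
  · have hleft : HasDerivWithinAt (fun x : ℝ => max x 0 ^ 2) 0 (Iic 0) 0 :=
      (hasDerivWithinAt_const 0 _ (0 : ℝ)).congr
        (fun x hx => by simp [max_eq_right (mem_Iic.1 hx)]) (by simp)
    have hright : HasDerivWithinAt (fun x : ℝ => max x 0 ^ 2) 0 (Ici 0) 0 := by
      simpa using ((hasDerivAt_pow 2 (0 : ℝ)).hasDerivWithinAt (s := Ici 0)).congr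
        (fun x hx => by simp [max_eq_left (mem_Ici.1 hx)]) (by simp)
    simpa [← hasDerivWithinAt_univ] using hleft.union hright
  · have hsq : (fun x : ℝ => max x 0 ^ 2) =ᶠ[𝓝 t] fun x => x ^ 2 := by
      filter_upwards [Ioi_mem_nhds ht] with x hx
      simp [max_eq_left (le_of_lt (mem_Ioi.1 hx))]
    simpa [max_eq_left ht.le] using (hasDerivAt_pow 2 t).congr_of_eventuallyEq hsq

theorem contDiff_max_zero_sq : ContDiff ℝ 1 fun x : ℝ => max x 0 ^ 2 := by
  rw [contDiff_one_iff_deriv]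
  refine ⟨fun t => (hasDerivAt_max_zero_sq t).differentiableAt, ?_⟩
  rw [funext fun t => (hasDerivAt_max_zero_sq t).deriv]
  fun_prop

theorem contDiffAt_div_norm_smul {E : Type*} [NormedAddCommGroup E] [InnerProductSpace ℝ E]
    {n : WithTop ℕ∞} {φ : ℝ → ℝ} (hφ : ContDiff ℝ n φ) {z : E} (hz : z ≠ 0) :
    ContDiffAt ℝ n (fun w : E => (φ ‖w‖ / ‖w‖) • w) z :=
  have hnorm : ContDiffAt ℝ n (fun w : E => ‖w‖) z := contDiffAt_norm ℝ hz
  ((hφ.contDiffAt.comp z hnorm).div hnorm (norm_ne_zero_iff.2 hz)).smul contDiffAt_id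

noncomputable def hregProfile (γ g r : ℝ) : ℝ :=
  if g + 1 / (2 * γ) ≤ γ * r then g
  else if g - 1 / (2 * γ) ≤ γ * r then g - γ / 2 * (g - γ * r + 1 / (2 * γ)) ^ 2
  else γ * r

theorem hreg_eq_hregProfile_smul (γ g : ℝ) (z : EuclideanSpace ℝ (Fin 2)) :
    hreg γ g z = (hregProfile γ g ‖z‖ / ‖z‖) • z := by
  rcases eq_or_ne z 0 with rfl | hz
  · simp [hreg]
  unfold hreg hregProfile
  split_ifs
  · rfl
  · rfl
  · rw [mul_div_cancel_right₀ _ (norm_ne_zero_iff.2 hz)]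

theorem hregProfile_eq_max_sq {γ : ℝ} (hγ : 0 < γ) (g : ℝ) :
    hregProfile γ g = fun r => g - γ / 2 * max (g + 1 / (2 * γ) - γ * r) 0 ^ 2
      + γ / 2 * max (g - 1 / (2 * γ) - γ * r) 0 ^ 2 := by
  have hδ : 0 < 1 / (2 * γ) := by positivity
  funext r
  unfold hregProfile
  split_ifs with hout hmid
  · rw [max_eq_right (by linarith), max_eq_right (by linarith)]
    ring
  · rw [max_eq_left (by linarith), max_eq_right (by linarith)]
    ring
  · rw [max_eq_left (by linarith), max_eq_left (by linarith)]
    field_simp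
    ring

theorem contDiff_hregProfile {γ : ℝ} (hγ : 0 < γ) (g : ℝ) :
    ContDiff ℝ 1 (hregProfile γ g) := by
  rw [hregProfile_eq_max_sq hγ]
  have hsq (c : ℝ) : ContDiff ℝ 1 fun r : ℝ => max (c - γ * r) 0 ^ 2 :=
    contDiff_max_zero_sq.comp (contDiff_const.sub (contDiff_const.mul contDiff_id))
  exact (contDiff_const.sub (contDiff_const.mul (hsq _))).add (contDiff_const.mul (hsq _))

theorem abs_hregProfile_le {γ g r : ℝ} (hγ : 0 < γ) (hγg : 1 < 2 * γ * g) (hr : 0 ≤ r) :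
    |hregProfile γ g r| ≤ g := by
  set δ := 1 / (2 * γ)
  have hγδ : γ * δ = 1 / 2 := by simp only [δ]; field_simp
  have hδ : 0 < δ := by positivity
  have hδg : δ < g := by nlinarith
  unfold hregProfile
  split_ifs with hout hmid
  · exact (abs_of_pos (by linarith)).le
  · set u := g - γ * r + δ
    have hu : 0 ≤ u ∧ u ≤ 2 * δ := ⟨by linarith, by linarith⟩
    have : γ / 2 * u ^ 2 ≤ δ := by nlinarith [mul_le_mul_of_nonneg_left hu.2 hu.1]
    rw [abs_le]; constructor <;> nlinarith [sq_nonneg u]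
  · rw [abs_le]; constructor <;> nlinarith

theorem hreg_eventuallyEq_smul_nhds_zero {γ g : ℝ} (hγ : 0 < γ) (hb : 0 < g - 1 / (2 * γ)) :
    hreg γ g =ᶠ[𝓝 0] (γ • ·) := by
  filter_upwards [Metric.ball_mem_nhds 0 (div_pos hb hγ)] with w hw
  have hw : γ * ‖w‖ < g - 1 / (2 * γ) := by
    rw [mem_ball_zero_iff, lt_div_iff₀ hγ] at hw; linarith
  have hδ : 0 < 1 / (2 * γ) := by positivity
  unfold hreg
  rw [if_neg (by linarith), if_neg (not_le.2 hw)]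

theorem norm_hreg_le_abs_hregProfile (γ g : ℝ) (z : EuclideanSpace ℝ (Fin 2)) :
    ‖hreg γ g z‖ ≤ |hregProfile γ g ‖z‖| := by
  rcases eq_or_ne z 0 with rfl | hz
  · simp [hreg]
  rw [hreg_eq_hregProfile_smul, norm_smul, Real.norm_eq_abs, abs_div, abs_norm,
    div_mul_cancel₀ _ (norm_ne_zero_iff.2 hz)]

theorem hreg_contDiff_and_bounded_general (γ g : ℝ) (hγ : 0 < γ)
    (hγg : 1 < 2 * γ * g) :
    ContDiff ℝ 1 (hreg γ g) ∧ ∀ z : EuclideanSpace ℝ (Fin 2), ‖hreg γ g z‖ ≤ g := by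
  refine ⟨contDiff_iff_contDiffAt.2 fun z => ?_, fun z => ?_⟩
  · rcases eq_or_ne z 0 with rfl | hz
    · have hb : 0 < g - 1 / (2 * γ) := by
        rw [sub_pos, div_lt_iff₀ (by positivity)]; linarith
      exact (contDiff_const_smul γ).contDiffAt.congr_of_eventuallyEq
        (hreg_eventuallyEq_smul_nhds_zero hγ hb)
    · rw [funext (hreg_eq_hregProfile_smul γ g)]
      exact contDiffAt_div_norm_smul (contDiff_hregProfile hγ g) hz
  · exact (norm_hreg_le_abs_hregProfile γ g z).trans (abs_hregProfile_le hγ hγg (norm_nonneg z))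

/-- For γ > 0, g > 0 with 2γg > 1, the map `h_{γ,g}` is continuously differentiable on
all of ℝ² and satisfies `|h_{γ,g}(z)| ≤ g` for every z ∈ ℝ². -/
theorem hreg_contDiff_and_bounded (γ g : ℝ) (hγ : 0 < γ) (hg : 0 < g)
    (hγg : 1 < 2 * γ * g) :
    ContDiff ℝ 1 (hreg γ g) ∧ ∀ z : EuclideanSpace ℝ (Fin 2), ‖hreg γ g z‖ ≤ g :=
  hreg_contDiff_and_bounded_general γ g hγ hγg
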